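/- Let G¹ = (1/2)·I + Σ_i γ_i σ_i and H¹ = (1/2)·I + Σ_i ζ_i σ_i be positive 2×2 Hermitian matrices written in the Pauli basis, with all ζ_i ≠ 0. Then there exist probabilities p_0, p_1, p_2, p_3 ≥ 0 summing to 1 with Σ_k p_k σ_k H¹ σ_k = G¹ if and only if, setting r_i = γ_i/ζ_i, the inequalities 1 + r_1 − r_2 − r_3 ≥ 0, 1 − r_1 + r_2 − r_3 ≥ 0, 1 − r_1 − r_2 + r_3 ≥ 0, and 1 + r_1 + r_2 + r_3 ≥ 0 all hold; in that case p_i = (1/4)(1 + r_i − r_j − r_k) for {i,j,k} = {1,2,3} and p_0 = (1/4)(1 + r_1 + r_2 + r_3). -/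

import Mathlib

/-! Conjugation by `σ_k` fixes `σ_0` and `σ_k` and negates the other two Pauli matrices, so
the Pauli channel with weights `p` sends `H¹` to `(1/2)I + Σ_i η_i ζ_i σ_i` with
`η_i = p_0 + p_i − p_j − p_k`. Pauli coefficients are unique, so the channel hits `G¹` exactly
when `η_i = r_i` for `i = 1, 2, 3`. Together with `Σ_k p_k = 1` this is a linear system with an
invertible (Hadamard) matrix, whose unique solution is the stated `p`; such a probability vector
exists iff that solution is nonnegative. -/


open scoped ComplexOrder

/-- The Pauli matrices `σ₀ = I, σ₁, σ₂, σ₃`. -/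
noncomputable def pauli : Fin 4 → Matrix (Fin 2) (Fin 2) ℂ :=
  ![1, !![0, 1; 1, 0], !![0, -Complex.I; Complex.I, 0], !![1, 0; 0, -1]]

/-- `Gmat a b c = (1/2)·I + a σ₁ + b σ₂ + c σ₃`, a Hermitian matrix in the Pauli
basis with real coefficients. -/
noncomputable def Gmat (a b c : ℝ) : Matrix (Fin 2) (Fin 2) ℂ :=
  (1 / 2 : ℂ) • 1 + (a : ℂ) • pauli 1 + (b : ℂ) • pauli 2 + (c : ℂ) • pauli 3

open Matrix

def pauliSign (k i : Fin 4) : ℝ := if k = 0 ∨ i = 0 ∨ k = i then 1 else -1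

lemma pauli_mul_pauli_mul_pauli (k i : Fin 4) :
    pauli k * pauli i * pauli k = (pauliSign k i : ℂ) • pauli i := by
  fin_cases k <;> fin_cases i <;> ext a b <;> fin_cases a <;> fin_cases b <;>
    simp [pauli, pauliSign, Matrix.mul_apply, Fin.sum_univ_two]

lemma pauli_mul_Gmat_mul_pauli (k : Fin 4) (a b c : ℝ) :
    pauli k * Gmat a b c * pauli k =
      Gmat (pauliSign k 1 * a) (pauliSign k 2 * b) (pauliSign k 3 * c) := by
  have hsq : pauli k * 1 * pauli k = 1 := by
    simpa [pauliSign, pauli] using pauli_mul_pauli_mul_pauli k 0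
  simp only [Gmat, Matrix.mul_add, Matrix.add_mul, Matrix.mul_smul, Matrix.smul_mul, hsq,
    pauli_mul_pauli_mul_pauli, smul_smul]
  push_cast; ring_nf

lemma sum_smul_Gmat {ι : Type*} [Fintype ι] (p : ι → ℝ) (hp : ∑ k, p k = 1)
    (a b c : ι → ℝ) :
    ∑ k, (p k : ℂ) • Gmat (a k) (b k) (c k) =
      Gmat (∑ k, p k * a k) (∑ k, p k * b k) (∑ k, p k * c k) := by
  simp only [Gmat, smul_add, Finset.sum_add_distrib, smul_smul, ← Finset.sum_smul]
  rw [← Finset.sum_mul]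
  push_cast
  rw [← Complex.ofReal_sum, hp, Complex.ofReal_one, one_mul]

lemma Gmat_apply_zero_zero (a b c : ℝ) : Gmat a b c 0 0 = 1 / 2 + c := by
  simp [Gmat, pauli]

lemma Gmat_apply_one_zero (a b c : ℝ) : Gmat a b c 1 0 = ⟨a, b⟩ := by
  apply Complex.ext <;> simp [Gmat, pauli]

lemma Gmat_inj {a b c a' b' c' : ℝ} :
    Gmat a b c = Gmat a' b' c' ↔ a = a' ∧ b = b' ∧ c = c' := by
  refine ⟨fun h => ?_, by rintro ⟨rfl, rfl, rfl⟩; rfl⟩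
  have h10 : (⟨a, b⟩ : ℂ) = ⟨a', b'⟩ := by
    rw [← Gmat_apply_one_zero, h, Gmat_apply_one_zero]
  have h00 : (1 / 2 + c : ℂ) = 1 / 2 + c' := by
    rw [← Gmat_apply_zero_zero a b, h, Gmat_apply_zero_zero]
  obtain ⟨rfl, rfl⟩ := Complex.mk.inj h10
  exact ⟨rfl, rfl, by exact_mod_cast add_left_cancel h00⟩

noncomputable def pauliChannel (p : Fin 4 → ℝ) (H : Matrix (Fin 2) (Fin 2) ℂ) :
    Matrix (Fin 2) (Fin 2) ℂ :=
  ∑ k, (p k : ℂ) • (pauli k * H * pauli k)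

lemma pauliChannel_Gmat {p : Fin 4 → ℝ} (hp : ∑ k, p k = 1) (a b c : ℝ) :
    pauliChannel p (Gmat a b c) =
      Gmat ((p 0 + p 1 - p 2 - p 3) * a) ((p 0 - p 1 + p 2 - p 3) * b)
        ((p 0 - p 1 - p 2 + p 3) * c) := by
  simp only [pauliChannel, pauli_mul_Gmat_mul_pauli, sum_smul_Gmat p hp, Fin.sum_univ_four]
  congr 1 <;>
    simp only [pauliSign, Fin.reduceEq, one_ne_zero, zero_ne_one, or_self, or_false, or_true,
      ↓reduceIte, one_mul, neg_mul, mul_neg] <;>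
    ring

noncomputable def pauliWeights (r₁ r₂ r₃ : ℝ) : Fin 4 → ℝ :=
  ![(1 + r₁ + r₂ + r₃) / 4, (1 + r₁ - r₂ - r₃) / 4, (1 - r₁ + r₂ - r₃) / 4,
    (1 - r₁ - r₂ + r₃) / 4]

lemma sum_pauliWeights (r₁ r₂ r₃ : ℝ) : ∑ k, pauliWeights r₁ r₂ r₃ k = 1 := by
  simp only [pauliWeights, Fin.sum_univ_four, cons_val_zero, cons_val_one, cons_val]
  ring

lemma pauliWeights_nonneg_iff {r₁ r₂ r₃ : ℝ} :
    (∀ k, 0 ≤ pauliWeights r₁ r₂ r₃ k) ↔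
      (1 + r₁ - r₂ - r₃ ≥ 0 ∧ 1 - r₁ + r₂ - r₃ ≥ 0 ∧ 1 - r₁ - r₂ + r₃ ≥ 0 ∧
        1 + r₁ + r₂ + r₃ ≥ 0) := by
  simp only [Fin.forall_fin_succ, pauliWeights, cons_val_zero, cons_val_succ,
    IsEmpty.forall_iff, and_true, ge_iff_le]
  constructor
  · rintro ⟨h0, h1, h2, h3⟩
    exact ⟨by linarith, by linarith, by linarith, by linarith⟩
  · rintro ⟨h1, h2, h3, h0⟩
    exact ⟨by linarith, by linarith, by linarith, by linarith⟩

lemma eq_pauliWeights_iff {p : Fin 4 → ℝ} (hp : ∑ k, p k = 1) (r₁ r₂ r₃ : ℝ) :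
    p = pauliWeights r₁ r₂ r₃ ↔
      p 0 + p 1 - p 2 - p 3 = r₁ ∧ p 0 - p 1 + p 2 - p 3 = r₂ ∧ p 0 - p 1 - p 2 + p 3 = r₃ := by
  rw [Fin.sum_univ_four] at hp
  constructor
  · rintro rfl
    simp only [pauliWeights, cons_val_zero, cons_val_one, cons_val]
    exact ⟨by ring, by ring, by ring⟩
  · rintro ⟨h₁, h₂, h₃⟩
    funext k
    fin_cases k <;>
      simp only [Fin.zero_eta, Fin.mk_one, Fin.reduceFinMk, pauliWeights, cons_val_zero,
        cons_val_one, cons_val] <;>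
      linarith

lemma pauliChannel_Gmat_eq_iff {z₁ z₂ z₃ : ℝ} (hz₁ : z₁ ≠ 0) (hz₂ : z₂ ≠ 0) (hz₃ : z₃ ≠ 0)
    (g₁ g₂ g₃ : ℝ) {p : Fin 4 → ℝ} (hp : ∑ k, p k = 1) :
    pauliChannel p (Gmat z₁ z₂ z₃) = Gmat g₁ g₂ g₃ ↔
      p = pauliWeights (g₁ / z₁) (g₂ / z₂) (g₃ / z₃) := by
  rw [pauliChannel_Gmat hp, Gmat_inj, eq_pauliWeights_iff hp, eq_div_iff hz₁, eq_div_iff hz₂,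
    eq_div_iff hz₃]

theorem stmt18_general (g1 g2 g3 z1 z2 z3 : ℝ)
    (hz1 : z1 ≠ 0) (hz2 : z2 ≠ 0) (hz3 : z3 ≠ 0) :
    ((∃ p : Fin 4 → ℝ, (∀ k, 0 ≤ p k) ∧ (∑ k, p k = 1) ∧
        (∑ k, (p k : ℂ) • (pauli k * Gmat z1 z2 z3 * pauli k)) = Gmat g1 g2 g3) ↔
      (1 + g1 / z1 - g2 / z2 - g3 / z3 ≥ 0 ∧ 1 - g1 / z1 + g2 / z2 - g3 / z3 ≥ 0 ∧
        1 - g1 / z1 - g2 / z2 + g3 / z3 ≥ 0 ∧ 1 + g1 / z1 + g2 / z2 + g3 / z3 ≥ 0)) ∧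
    (∀ p : Fin 4 → ℝ, (∀ k, 0 ≤ p k) → (∑ k, p k = 1) →
      (∑ k, (p k : ℂ) • (pauli k * Gmat z1 z2 z3 * pauli k)) = Gmat g1 g2 g3 →
      p 0 = (1 + g1 / z1 + g2 / z2 + g3 / z3) / 4 ∧
      p 1 = (1 + g1 / z1 - g2 / z2 - g3 / z3) / 4 ∧
      p 2 = (1 - g1 / z1 + g2 / z2 - g3 / z3) / 4 ∧
      p 3 = (1 - g1 / z1 - g2 / z2 + g3 / z3) / 4) := by
  have hchannel {p : Fin 4 → ℝ} (hp : ∑ k, p k = 1) :=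
    pauliChannel_Gmat_eq_iff hz1 hz2 hz3 g1 g2 g3 hp
  refine ⟨⟨?_, fun hr => ?_⟩, fun p _ hp he => ?_⟩
  · rintro ⟨p, hp₀, hp, he⟩
    rw [(hchannel hp).1 he] at hp₀
    exact pauliWeights_nonneg_iff.1 hp₀
  · exact ⟨_, pauliWeights_nonneg_iff.2 hr, sum_pauliWeights _ _ _,
      (hchannel (sum_pauliWeights _ _ _)).2 rfl⟩
  · rw [(hchannel hp).1 he]
    exact ⟨rfl, rfl, rfl, rfl⟩

/-- Let `G¹ = (1/2)I + Σ γ_i σ_i` and `H¹ = (1/2)I + Σ ζ_i σ_i` be positive Hermitian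
matrices with all `ζ_i ≠ 0`. There exist probabilities `p₀,…,p₃` with
`Σ_k p_k σ_k H¹ σ_k = G¹` iff, with `r_i = γ_i/ζ_i`, the four inequalities
`1 + r₁ − r₂ − r₃ ≥ 0`, `1 − r₁ + r₂ − r₃ ≥ 0`, `1 − r₁ − r₂ + r₃ ≥ 0`,
`1 + r₁ + r₂ + r₃ ≥ 0` hold; in that case the probabilities are uniquely
`p_i = (1 + r_i − r_j − r_k)/4` and `p₀ = (1 + r₁ + r₂ + r₃)/4`. -/
theorem stmt18 (g1 g2 g3 z1 z2 z3 : ℝ)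
    (hz1 : z1 ≠ 0) (hz2 : z2 ≠ 0) (hz3 : z3 ≠ 0)
    (hG : (Gmat g1 g2 g3).PosDef) (hH : (Gmat z1 z2 z3).PosDef) :
    ((∃ p : Fin 4 → ℝ, (∀ k, 0 ≤ p k) ∧ (∑ k, p k = 1) ∧
        (∑ k, (p k : ℂ) • (pauli k * Gmat z1 z2 z3 * pauli k)) = Gmat g1 g2 g3) ↔
      (1 + g1 / z1 - g2 / z2 - g3 / z3 ≥ 0 ∧ 1 - g1 / z1 + g2 / z2 - g3 / z3 ≥ 0 ∧
        1 - g1 / z1 - g2 / z2 + g3 / z3 ≥ 0 ∧ 1 + g1 / z1 + g2 / z2 + g3 / z3 ≥ 0)) ∧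
    (∀ p : Fin 4 → ℝ, (∀ k, 0 ≤ p k) → (∑ k, p k = 1) →
      (∑ k, (p k : ℂ) • (pauli k * Gmat z1 z2 z3 * pauli k)) = Gmat g1 g2 g3 →
      p 0 = (1 + g1 / z1 + g2 / z2 + g3 / z3) / 4 ∧
      p 1 = (1 + g1 / z1 - g2 / z2 - g3 / z3) / 4 ∧
      p 2 = (1 - g1 / z1 + g2 / z2 - g3 / z3) / 4 ∧
      p 3 = (1 - g1 / z1 - g2 / z2 + g3 / z3) / 4) :=
  stmt18_general g1 g2 g3 z1 z2 z3 hz1 hz2 hz3
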